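/- Let S be a set of n points in the plane in general position and let j be an integer with 0 ≤ j ≤ n−2. Then there exist two distinct points r, b ∈ S such that exactly j points of S lie strictly on one side of the line through r and b (i.e., strictly to the left of the directed line from r to b). -/

import Mathlib

/-- Points in the plane. -/
abbrev Pt : Type := ℝ × ℝ

/-- A finite point set is in general position if no three of its points are collinear. -/
def GenPos (S : Finset Pt) : Prop :=
  ∀ p ∈ S, ∀ q ∈ S, ∀ r ∈ S, p ≠ q → p ≠ r → q ≠ r →
    ¬ Collinear ℝ ({p, q, r} : Set Pt)

/-- A geometric graph on `S` (a simple graph on the points of `S`, edges drawn as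
straight segments) is plane if the open segments of any two distinct edges are disjoint. -/
def IsPlaneGraph {S : Finset Pt} (G : SimpleGraph {x // x ∈ S}) : Prop :=
  ∀ a b c d : {x // x ∈ S}, G.Adj a b → G.Adj c d → s(a, b) ≠ s(c, d) →
    openSegment ℝ (a : Pt) (b : Pt) ∩ openSegment ℝ (c : Pt) (d : Pt) = ∅

/-- A plane spanning tree of `S`: a tree on all points of `S` drawn without crossings. -/
def IsPlaneSpanningTree {S : Finset Pt} (G : SimpleGraph {x // x ∈ S}) : Prop :=
  G.IsTree ∧ IsPlaneGraph G

/-- A plane spanning path of `S`: a plane spanning tree in which every vertex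
has degree at most two (i.e. a plane Hamiltonian path). -/
def IsPlaneSpanningPath {S : Finset Pt} (G : SimpleGraph {x // x ∈ S}) : Prop :=
  IsPlaneSpanningTree G ∧
    ∀ v a b c : {x // x ∈ S}, G.Adj v a → G.Adj v b → G.Adj v c →
      (a = b ∨ a = c ∨ b = c)

/-- The open segment spanned by an unordered pair of points. -/
def segOpen (e : Sym2 Pt) : Set Pt :=
  Sym2.lift ⟨fun a b => openSegment ℝ a b, fun a b => openSegment_symm ℝ a b⟩ e

/-- `F` is a crossing family in `S`: a set of nondegenerate segments with endpoints
in `S`, any two of which cross (their open segments intersect). -/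
def IsCrossingFamily (S : Finset Pt) (F : Finset (Sym2 Pt)) : Prop :=
  (∀ e ∈ F, ¬ e.IsDiag ∧ ∀ x ∈ e, x ∈ S) ∧
  (∀ e ∈ F, ∀ f ∈ F, e ≠ f → (segOpen e ∩ segOpen f).Nonempty)

/-- `x` lies strictly to the left of the directed line from `p` to `q`. -/
def leftOf (p q x : Pt) : Prop :=
  0 < (q.1 - p.1) * (x.2 - p.2) - (q.2 - p.2) * (x.1 - p.1)

/-- `x` lies strictly to the right of the directed line from `p` to `q`. -/
def rightOf (p q x : Pt) : Prop :=
  (q.1 - p.1) * (x.2 - p.2) - (q.2 - p.2) * (x.1 - p.1) < 0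

/-- The double star on `S` associated with the directed edge `pq`: the edge `pq`,
the edges from `p` to all points strictly left of the directed line `pq`, and the
edges from `q` to all points strictly right of it. -/
def doubleStar (S : Finset Pt) (p q : Pt) : SimpleGraph {x // x ∈ S} :=
  SimpleGraph.fromRel fun a b =>
    ((a : Pt) = p ∧ (b : Pt) = q) ∨
    ((a : Pt) = p ∧ leftOf p q (b : Pt)) ∨
    ((a : Pt) = q ∧ rightOf p q (b : Pt))

/-- The regular wheel configuration `W_{2n}`: `2n-1` points regularly spaced on the
unit circle together with its center. -/
noncomputable def wheel (n : ℕ) : Finset Pt :=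
  insert ((0 : ℝ), (0 : ℝ)) <| (Finset.range (2 * n - 1)).image fun j : ℕ =>
    (Real.cos (2 * Real.pi * (j : ℝ) / ((2 * n - 1 : ℕ) : ℝ)),
     Real.sin (2 * Real.pi * (j : ℝ) / ((2 * n - 1 : ℕ) : ℝ)))

/-!
Take `r` to be the lowest point of `S` (lowest-then-leftmost). Every other point lies in the
half-open upper half-plane at `r`, where "`c` is left of the directed line `r a`" is a strict
total order on `S \ {r}` (the order by angle around `r`); general position makes it total.
The number of points left of `r b` is strictly decreasing along this order, so it takes
`n - 1` distinct values in `{0, …, n - 2}`, i.e. all of them.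
-/

open Finset

section StrictTotalOrder

variable {α : Type*} {R : α → α → Prop} [DecidableRel R] {T : Finset α}

lemma card_filter_lt_card_filter_of_rel (irrefl : ∀ a ∈ T, ¬ R a a)
    (trans : ∀ a ∈ T, ∀ b ∈ T, ∀ c ∈ T, R a b → R b c → R a c)
    {a b : α} (ha : a ∈ T) (hb : b ∈ T) (hab : R a b) :
    #(T.filter (R b)) < #(T.filter (R a)) := by
  refine card_lt_card ⟨fun x hx => ?_, fun hsub => ?_⟩
  · rw [mem_filter] at hx ⊢
    exact ⟨hx.1, trans a ha b hb x hx.1 hab hx.2⟩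
  · exact irrefl b hb (mem_filter.mp (hsub (mem_filter.mpr ⟨hb, hab⟩))).2

lemma exists_card_filter_rel_eq (irrefl : ∀ a ∈ T, ¬ R a a)
    (trans : ∀ a ∈ T, ∀ b ∈ T, ∀ c ∈ T, R a b → R b c → R a c)
    (total : ∀ a ∈ T, ∀ b ∈ T, a ≠ b → R a b ∨ R b a) {j : ℕ} (hj : j < #T) :
    ∃ b ∈ T, #(T.filter (R b)) = j := by
  classical
  have hmaps : Set.MapsTo (fun b => #(T.filter (R b))) T (range #T) := fun b hb => by
    have hsub : T.filter (R b) ⊆ T.erase b := fun x hx => by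
      rw [mem_filter] at hx
      exact mem_erase.mpr ⟨fun hxb => irrefl b hb (hxb ▸ hx.2), hx.1⟩
    have := card_le_card hsub
    rw [card_erase_of_mem hb] at this
    simp only [coe_range, Set.mem_Iio]
    omega
  have hinj : Set.InjOn (fun b => #(T.filter (R b))) T := fun a ha b hb hab => by
    by_contra hne
    rcases total a ha b hb hne with h | h
    · exact (card_filter_lt_card_filter_of_rel irrefl trans ha hb h).ne' hab
    · exact (card_filter_lt_card_filter_of_rel irrefl trans hb ha h).ne hab
  obtain ⟨b, hb, hbj⟩ := surjOn_of_injOn_of_card_le _ hmaps hinj (by rw [card_range])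
    (mem_range.mpr hj)
  exact ⟨b, hb, hbj⟩

end StrictTotalOrder

lemma not_leftOf_right (p q : Pt) : ¬ leftOf p q q := by
  unfold leftOf; nlinarith

lemma not_leftOf_left (p q : Pt) : ¬ leftOf p q p := by
  unfold leftOf; nlinarith

lemma collinear_of_not_leftOf_of_not_rightOf {p q x : Pt} (hpq : p ≠ q)
    (hl : ¬ leftOf p q x) (hr : ¬ rightOf p q x) : Collinear ℝ ({p, q, x} : Set Pt) := by
  have h : (q.1 - p.1) * (x.2 - p.2) - (q.2 - p.2) * (x.1 - p.1) = 0 :=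
    le_antisymm (not_lt.mp hl) (not_lt.mp hr)
  have hnorm : (q.1 - p.1) ^ 2 + (q.2 - p.2) ^ 2 ≠ 0 := by
    intro h0
    exact hpq (Prod.ext (by nlinarith) (by nlinarith))
  rw [collinear_iff_of_mem (Set.mem_insert p _)]
  refine ⟨q - p, ?_⟩
  simp only [Set.mem_insert_iff, Set.mem_singleton_iff]
  rintro y (rfl | rfl | rfl)
  · exact ⟨0, by simp⟩
  · exact ⟨1, by simp⟩
  · -- the coefficient of the orthogonal projection of `y - p` onto `q - p`
    refine ⟨((y.1 - p.1) * (q.1 - p.1) + (y.2 - p.2) * (q.2 - p.2)) /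
      ((q.1 - p.1) ^ 2 + (q.2 - p.2) ^ 2), Prod.ext ?_ ?_⟩
    · simp only [vadd_eq_add, Prod.fst_add, Prod.smul_fst, Prod.fst_sub, smul_eq_mul]
      field_simp
      linear_combination -(q.2 - p.2) * h
    · simp only [vadd_eq_add, Prod.snd_add, Prod.smul_snd, Prod.snd_sub, smul_eq_mul]
      field_simp
      linear_combination (q.1 - p.1) * h

lemma GenPos.leftOf_or_leftOf {S : Finset Pt} (hS : GenPos S) {r a b : Pt}
    (hr : r ∈ S) (ha : a ∈ S) (hb : b ∈ S) (hra : r ≠ a) (hrb : r ≠ b) (hab : a ≠ b) :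
    leftOf r a b ∨ leftOf r b a := by
  by_cases hl : leftOf r a b
  · exact .inl hl
  have hright : rightOf r a b := by
    by_contra hright
    exact hS r hr a ha b hb hra hrb hab (collinear_of_not_leftOf_of_not_rightOf hra hl hright)
  right
  unfold leftOf
  unfold rightOf at hright
  linarith

/-- Orientation is transitive on vectors of the half-open upper half-plane: there every
vector has an argument in `[0, π)`, and `0 < u₁ v₂ - u₂ v₁` says that `v` has the larger one. -/
lemma cross_pos_trans {u₁ u₂ v₁ v₂ w₁ w₂ : ℝ} (hu : 0 < u₂ ∨ u₂ = 0 ∧ 0 < u₁)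
    (hv : 0 < v₂ ∨ v₂ = 0 ∧ 0 < v₁) (hw : 0 < w₂ ∨ w₂ = 0 ∧ 0 < w₁)
    (huv : 0 < u₁ * v₂ - u₂ * v₁) (hvw : 0 < v₁ * w₂ - v₂ * w₁) : 0 < u₁ * w₂ - u₂ * w₁ := by
  rcases hu with hu | ⟨rfl, hu⟩ <;> rcases hv with hv | ⟨rfl, hv⟩ <;>
    rcases hw with hw | ⟨rfl, hw⟩ <;> nlinarith

lemma sub_pos_or_of_toLex_lt {p q : Pt} (h : toLex (p.2, p.1) < toLex (q.2, q.1)) :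
    0 < q.2 - p.2 ∨ q.2 - p.2 = 0 ∧ 0 < q.1 - p.1 := by
  simp only [Prod.Lex.toLex_lt_toLex] at h
  rcases h with h | ⟨h, h'⟩
  · exact .inl (sub_pos.2 h)
  · exact .inr ⟨sub_eq_zero.2 h.symm, sub_pos.2 h'⟩

lemma leftOf_trans_of_toLex_lt {r a b c : Pt} (ha : toLex (r.2, r.1) < toLex (a.2, a.1))
    (hb : toLex (r.2, r.1) < toLex (b.2, b.1)) (hc : toLex (r.2, r.1) < toLex (c.2, c.1))
    (hab : leftOf r a b) (hbc : leftOf r b c) : leftOf r a c :=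
  cross_pos_trans (sub_pos_or_of_toLex_lt ha) (sub_pos_or_of_toLex_lt hb)
    (sub_pos_or_of_toLex_lt hc) hab hbc

/-- For a set `S` of `n` points in general position and any
`0 ≤ j ≤ n − 2`, there are two distinct points `r, b ∈ S` such that exactly `j`
points of `S` lie strictly to the left of the directed line from `r` to `b`. -/
theorem exists_j_edge (S : Finset Pt) (n : ℕ) (hS : S.card = n) (hgp : GenPos S)
    (j : ℕ) (hj : j + 2 ≤ n) :
    ∃ r ∈ S, ∃ b ∈ S, r ≠ b ∧ {x ∈ (S : Set Pt) | leftOf r b x}.ncard = j := by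
  classical
  obtain ⟨r, hrS, hrmin⟩ := S.exists_min_image (fun p => toLex (p.2, p.1))
    (card_pos.mp (by omega))
  have hlt : ∀ a ∈ S.erase r, toLex (r.2, r.1) < toLex (a.2, a.1) := fun a ha =>
    (hrmin a (mem_of_mem_erase ha)).lt_of_ne fun h =>
      ne_of_mem_erase ha (by simp_all [Prod.ext_iff])
  obtain ⟨b, hb, hcard⟩ := exists_card_filter_rel_eq (R := leftOf r) (T := S.erase r) (j := j)
    (fun a _ => not_leftOf_right r a)
    (fun a ha b hb c hc => leftOf_trans_of_toLex_lt (hlt a ha) (hlt b hb) (hlt c hc))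
    (fun a ha b hb => hgp.leftOf_or_leftOf hrS (mem_of_mem_erase ha) (mem_of_mem_erase hb)
      (ne_of_mem_erase ha).symm (ne_of_mem_erase hb).symm)
    (by rw [card_erase_of_mem hrS]; omega)
  refine ⟨r, hrS, b, mem_of_mem_erase hb, (ne_of_mem_erase hb).symm, ?_⟩
  rw [← hcard, filter_erase, erase_eq_of_notMem fun h => not_leftOf_left r b (mem_filter.mp h).2,
    ← Set.ncard_coe_finset, coe_filter]
  rfl
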